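/- Let μ ∈ (0, 1/2] and let c be a real number with c_J < c < c_h, where c_J = −1 − 2√(μ(1−μ)) and c_h = −1 + 2μ. Then 0 ≤ −(1−2μ)/c < 1, so there is a unique ν₁ ∈ (0, π) with cos ν₁ = −(1−2μ)/c. The point (ν₁, 0) is a critical point of the function h(ν, p) = 2p² + 2(1−2μ)cos ν + c·cos²ν, and at this point ∂²h/∂ν² = 2(c² − (1−2μ)²)/c < 0, ∂²h/∂p² = 4 > 0, and ∂²h/∂ν∂p = 0; hence (ν₁, 0) is a nondegenerate saddle point of h. (This expresses that the hyperbolic orbit — the Lyapunov orbit — is a hyperbolic critical circle for every such μ and c.) -/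

import Mathlib

/-- The ν-part of the regularized Hamiltonian of the Euler problem:
Q_ν(ν, p) = 2p² + 2(1-2μ)cos ν + c·cos²ν. -/
noncomputable def Qnu (μ c ν p : ℝ) : ℝ :=
  2 * p ^ 2 + 2 * (1 - 2 * μ) * Real.cos ν + c * Real.cos ν ^ 2

/-! Since `∂Q/∂ν = -2 sin ν (1 - 2μ + c cos ν)`, the critical points with `0 < ν < π` are where
`cos ν = -(1 - 2μ)/c`, a value in `[0, 1)` exactly because `c < c_h ≤ 0`. There the second
`ν`-derivative collapses to `2c sin² ν = 2(c² - (1 - 2μ)²)/c < 0`, while `Q` is `2p²` plus a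
function of `ν` alone, so the `p`-direction is convex and the mixed partial vanishes. -/

open Real Set

lemma existsUnique_mem_Ioo_cos_eq {x : ℝ} (hx₁ : -1 < x) (hx₂ : x < 1) :
    ∃! ν, ν ∈ Ioo 0 π ∧ cos ν = x := by
  refine ⟨arccos x, ⟨⟨arccos_pos.mpr hx₂, ?_⟩, cos_arccos hx₁.le hx₂.le⟩, ?_⟩
  · exact (arccos_le_pi x).lt_of_ne fun h => by linarith [arccos_eq_pi.mp h]
  · rintro ν ⟨hν, rfl⟩
    exact (arccos_cos hν.1.le hν.2.le).symm

lemma hasDerivAt_Qnu_nu (μ c ν : ℝ) :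
    HasDerivAt (fun ν => Qnu μ c ν 0) (-2 * sin ν * (1 - 2 * μ + c * cos ν)) ν := by
  have h := ((hasDerivAt_const ν (2 * (0 : ℝ) ^ 2)).add
    ((hasDerivAt_cos ν).const_mul (2 * (1 - 2 * μ)))).add (((hasDerivAt_cos ν).pow 2).const_mul c)
  exact h.congr_deriv (by ring)

lemma deriv_Qnu_nu (μ c : ℝ) :
    deriv (fun ν => Qnu μ c ν 0) = fun ν => -2 * sin ν * (1 - 2 * μ + c * cos ν) :=
  funext fun ν => (hasDerivAt_Qnu_nu μ c ν).deriv

lemma deriv_deriv_Qnu_nu (μ c ν : ℝ) :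
    deriv (deriv (fun ν => Qnu μ c ν 0)) ν =
      -2 * cos ν * (1 - 2 * μ + c * cos ν) + 2 * c * sin ν ^ 2 := by
  rw [deriv_Qnu_nu]
  have h := ((hasDerivAt_sin ν).const_mul (-2)).mul
    (((hasDerivAt_cos ν).const_mul c).const_add (1 - 2 * μ))
  exact (h.congr_deriv (by ring)).deriv

lemma hasDerivAt_Qnu_p (μ c ν p : ℝ) : HasDerivAt (fun p => Qnu μ c ν p) (4 * p) p := by
  have h := (((hasDerivAt_pow 2 p).const_mul 2).add_const (2 * (1 - 2 * μ) * cos ν)).add_const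
    (c * cos ν ^ 2)
  exact h.congr_deriv (by ring)

lemma deriv_Qnu_p (μ c ν : ℝ) : deriv (fun p => Qnu μ c ν p) = fun p => 4 * p :=
  funext fun p => (hasDerivAt_Qnu_p μ c ν p).deriv

lemma deriv_deriv_Qnu_p (μ c ν p : ℝ) : deriv (deriv (fun p => Qnu μ c ν p)) p = 4 := by
  rw [deriv_Qnu_p]
  simp

lemma deriv_Qnu_p_zero (μ c ν : ℝ) : deriv (fun p => Qnu μ c ν p) 0 = 0 := by
  simp [deriv_Qnu_p]

lemma critical_cos_nonneg_and_lt_one {μ c : ℝ} (hμ : μ ≤ 1 / 2) (hc : c < -1 + 2 * μ) :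
    0 ≤ -(1 - 2 * μ) / c ∧ -(1 - 2 * μ) / c < 1 := by
  have hc₀ : c < 0 := by linarith
  constructor
  · exact div_nonneg_of_nonpos (by linarith) hc₀.le
  · rw [div_lt_one_of_neg hc₀]; linarith

theorem lyapunov_orbit_hyperbolic_general (μ c : ℝ) (hμ1 : μ ≤ 1 / 2)
    (hc2 : c < -1 + 2 * μ) :
    (0 ≤ -(1 - 2 * μ) / c ∧ -(1 - 2 * μ) / c < 1) ∧
    (∃! ν₁ : ℝ, ν₁ ∈ Set.Ioo 0 Real.pi ∧ Real.cos ν₁ = -(1 - 2 * μ) / c) ∧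
    ∀ ν₁ : ℝ, ν₁ ∈ Set.Ioo 0 Real.pi → Real.cos ν₁ = -(1 - 2 * μ) / c →
      deriv (fun ν => Qnu μ c ν 0) ν₁ = 0 ∧
      deriv (fun p => Qnu μ c ν₁ p) 0 = 0 ∧
      deriv (deriv (fun ν => Qnu μ c ν 0)) ν₁ = 2 * (c ^ 2 - (1 - 2 * μ) ^ 2) / c ∧
      2 * (c ^ 2 - (1 - 2 * μ) ^ 2) / c < 0 ∧
      deriv (deriv (fun p => Qnu μ c ν₁ p)) 0 = 4 ∧
      deriv (fun ν => deriv (fun p => Qnu μ c ν p) 0) ν₁ = 0 ∧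
      deriv (deriv (fun ν => Qnu μ c ν 0)) ν₁ *
          deriv (deriv (fun p => Qnu μ c ν₁ p)) 0 -
        (deriv (fun ν => deriv (fun p => Qnu μ c ν p) 0) ν₁) ^ 2 < 0 := by
  have hc₀ : c < 0 := by linarith
  obtain ⟨hx₀, hx₁⟩ := critical_cos_nonneg_and_lt_one hμ1 hc2
  refine ⟨⟨hx₀, hx₁⟩, existsUnique_mem_Ioo_cos_eq (by linarith) hx₁, fun ν₁ _ hcos => ?_⟩
  have hcrit : 1 - 2 * μ + c * cos ν₁ = 0 := by
    rw [hcos]; field_simp [hc₀.ne]; ring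
  have hνν : deriv (deriv (fun ν => Qnu μ c ν 0)) ν₁ = 2 * (c ^ 2 - (1 - 2 * μ) ^ 2) / c := by
    rw [deriv_deriv_Qnu_nu, hcrit, sin_sq, hcos]
    field_simp [hc₀.ne]; ring
  have hsaddle : 2 * (c ^ 2 - (1 - 2 * μ) ^ 2) / c < 0 :=
    div_neg_of_pos_of_neg (by nlinarith) hc₀
  have hmixed : deriv (fun ν => deriv (fun p => Qnu μ c ν p) 0) ν₁ = 0 := by
    simp [deriv_Qnu_p_zero]
  refine ⟨by rw [(hasDerivAt_Qnu_nu μ c ν₁).deriv, hcrit, mul_zero], deriv_Qnu_p_zero μ c ν₁,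
    hνν, hsaddle, deriv_deriv_Qnu_p μ c ν₁ 0, hmixed, ?_⟩
  rw [hνν, deriv_deriv_Qnu_p, hmixed]
  linarith

/-- For μ ∈ (0, 1/2] and c_J < c < c_h (c_J = -1 - 2√(μ(1-μ)), c_h = -1 + 2μ):
0 ≤ -(1-2μ)/c < 1, there is a unique ν₁ ∈ (0, π) with cos ν₁ = -(1-2μ)/c, and at
(ν₁, 0) the function Q_ν has a critical point with ∂²/∂ν² = 2(c²-(1-2μ)²)/c < 0,
∂²/∂p² = 4 > 0 and vanishing mixed partial; hence (ν₁, 0) is a nondegenerate saddle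
point (the hyperbolic/Lyapunov orbit is a hyperbolic critical circle). -/
theorem lyapunov_orbit_hyperbolic (μ c : ℝ) (hμ0 : 0 < μ) (hμ1 : μ ≤ 1 / 2)
    (hc1 : -1 - 2 * Real.sqrt (μ * (1 - μ)) < c) (hc2 : c < -1 + 2 * μ) :
    (0 ≤ -(1 - 2 * μ) / c ∧ -(1 - 2 * μ) / c < 1) ∧
    (∃! ν₁ : ℝ, ν₁ ∈ Set.Ioo 0 Real.pi ∧ Real.cos ν₁ = -(1 - 2 * μ) / c) ∧
    ∀ ν₁ : ℝ, ν₁ ∈ Set.Ioo 0 Real.pi → Real.cos ν₁ = -(1 - 2 * μ) / c →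
      deriv (fun ν => Qnu μ c ν 0) ν₁ = 0 ∧
      deriv (fun p => Qnu μ c ν₁ p) 0 = 0 ∧
      deriv (deriv (fun ν => Qnu μ c ν 0)) ν₁ = 2 * (c ^ 2 - (1 - 2 * μ) ^ 2) / c ∧
      2 * (c ^ 2 - (1 - 2 * μ) ^ 2) / c < 0 ∧
      deriv (deriv (fun p => Qnu μ c ν₁ p)) 0 = 4 ∧
      deriv (fun ν => deriv (fun p => Qnu μ c ν p) 0) ν₁ = 0 ∧
      deriv (deriv (fun ν => Qnu μ c ν 0)) ν₁ *
          deriv (deriv (fun p => Qnu μ c ν₁ p)) 0 -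
        (deriv (fun ν => deriv (fun p => Qnu μ c ν p) 0) ν₁) ^ 2 < 0 :=
  lyapunov_orbit_hyperbolic_general μ c hμ1 hc2
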